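/- Let H be a complex Hilbert space and let T, A be bounded operators with polar decompositions T = U_T|T|, A = U_A|A|, such that |T| commutes with A and |T*| commutes with |A|. If |T|^α·|A|·|T*|^β is positive for some reals α, β > 0, then |T|^{α'}·|A|·|T*|^{β'} is positive for all reals α', β' > 0. -/

import Mathlib

open ContinuousLinearMap

noncomputable def absOp {H K : Type*} [NormedAddCommGroup H] [InnerProductSpace ℂ H]
    [CompleteSpace H] [NormedAddCommGroup K] [InnerProductSpace ℂ K] [CompleteSpace K]
    (T : H →L[ℂ] K) : H →L[ℂ] H :=
  CFC.sqrt (ContinuousLinearMap.adjoint T ∘L T)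

noncomputable def projCR {H K : Type*} [NormedAddCommGroup H] [InnerProductSpace ℂ H]
    [CompleteSpace H] [NormedAddCommGroup K] [InnerProductSpace ℂ K] [CompleteSpace K]
    (C : K →L[ℂ] H) : H →L[ℂ] H :=
  letI := (LinearMap.range (C : K →ₗ[ℂ] H)).topologicalClosure.isClosed_topologicalClosure.completeSpace_coe
  (LinearMap.range (C : K →ₗ[ℂ] H)).topologicalClosure.subtypeL ∘L
    Submodule.orthogonalProjectionOnto (LinearMap.range (C : K →ₗ[ℂ] H)).topologicalClosure

/-- `B = U|B|` is the polar decomposition: `U` is a partial isometry (automatic) whose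
initial projection `U*U` is the orthogonal projection onto the closure of `range B*`. -/
noncomputable def IsPolarDecomp {H K : Type*} [NormedAddCommGroup H] [InnerProductSpace ℂ H]
    [CompleteSpace H] [NormedAddCommGroup K] [InnerProductSpace ℂ K] [CompleteSpace K]
    (B U : H →L[ℂ] K) : Prop :=
  B = U ∘L absOp B ∧
    ContinuousLinearMap.adjoint U ∘L U = projCR (ContinuousLinearMap.adjoint B)

/-!
Write `p = |T|^α`, `q = |T*|^β`, `b = |A|`; then `b` commutes with `p` and `q`, so `p b q` is
positive exactly when `p b` commutes with `q`, i.e. when `b (pq - qp) = 0`. This condition is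
symmetric in `p` and `q`, and in the form "`q b` commutes with `p`" it passes from `p` to any
function of `p`, in particular to `p ^ (α' / α) = |T|^α'`; symmetrically it passes from `q` to
`|T*|^β'`.
-/

theorem commute_mul_iff_commute_mul {R : Type*} [Semigroup R] {p q b : R}
    (hbp : Commute b p) (hbq : Commute b q) :
    Commute (p * b) q ↔ Commute (q * b) p := by
  have hl : p * b * q = p * q * b := by rw [mul_assoc, hbq.eq, ← mul_assoc]
  have hr : q * b * p = q * p * b := by rw [mul_assoc, hbp.eq, ← mul_assoc]
  simp only [Commute, SemiconjBy, hl, hr, ← mul_assoc]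
  exact eq_comm

section CStarAlgebra

variable {A : Type*} [CStarAlgebra A] [PartialOrder A] [StarOrderedRing A] {p q b : A}

theorem Commute.cfc_nnreal_mul_left (h : Commute (p * b) q) (hbp : Commute b p)
    (hbq : Commute b q) (f : NNReal → NNReal) : Commute (cfc f p * b) q := by
  have hbf : Commute b (cfc f p) := (hbp.symm.cfc_nnreal f).symm
  rw [commute_mul_iff_commute_mul hbf hbq]
  exact (((commute_mul_iff_commute_mul hbp hbq).1 h).symm.cfc_nnreal f).symm

theorem nonneg_mul_mul_iff_commute (hp : 0 ≤ p) (hq : 0 ≤ q) (hb : 0 ≤ b)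
    (hbp : Commute b p) :
    0 ≤ p * b * q ↔ Commute (p * b) q :=
  (commute_iff_mul_nonneg (hbp.symm.mul_nonneg hp hb) hq).symm

theorem rpow_mul_mul_rpow_nonneg (hp : 0 ≤ p) (hq : 0 ≤ q) (hb : 0 ≤ b)
    (hbp : Commute b p) (hbq : Commute b q) (h : 0 ≤ p * b * q) (s t : ℝ) :
    0 ≤ p ^ s * b * q ^ t := by
  have hbps : Commute b (p ^ s) := (hbp.symm.cfc_nnreal _).symm
  have hbqt : Commute b (q ^ t) := (hbq.symm.cfc_nnreal _).symm
  rw [nonneg_mul_mul_iff_commute hp hq hb hbp] at h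
  rw [nonneg_mul_mul_iff_commute CFC.rpow_nonneg CFC.rpow_nonneg hb hbps]
  have hs : Commute (p ^ s * b) q := h.cfc_nnreal_mul_left hbp hbq _
  have hst : Commute (q ^ t * b) (p ^ s) :=
    ((commute_mul_iff_commute_mul hbps hbq).1 hs).cfc_nnreal_mul_left hbq hbps _
  exact (commute_mul_iff_commute_mul hbps hbqt).2 hst

theorem rpow_rpow_div_self (hp : 0 ≤ p) {α α' : ℝ} (hα : 0 < α) (hα' : 0 ≤ α') :
    (p ^ α) ^ (α' / α) = p ^ α' := by
  rw [CFC.rpow_rpow_of_exponent_nonneg p α (α' / α) hα.le (div_nonneg hα' hα.le),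
    mul_div_cancel₀ α' hα.ne']

end CStarAlgebra

variable {H : Type*} [NormedAddCommGroup H] [InnerProductSpace ℂ H] [CompleteSpace H]

theorem absOp_nonneg (T : H →L[ℂ] H) : 0 ≤ absOp T := CFC.sqrt_nonneg _

theorem commute_absOp_of_commute {S A : H →L[ℂ] H} (hS : IsSelfAdjoint S) (h : Commute S A) :
    Commute S (absOp A) :=
  h.symm.cfcAbs_right (hS.star_eq.symm ▸ h.symm)

theorem stmt17_general (T A : H →L[ℂ] H)
    (hc1 : absOp T ∘L A = A ∘L absOp T)
    (hc2 : absOp (ContinuousLinearMap.adjoint T) ∘L absOp A =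
      absOp A ∘L absOp (ContinuousLinearMap.adjoint T))
    (α β : ℝ) (hα : 0 < α) (hβ : 0 < β)
    (h : (CFC.rpow (absOp T) α ∘L absOp A ∘L
      CFC.rpow (absOp (ContinuousLinearMap.adjoint T)) β).IsPositive) :
    ∀ α' β' : ℝ, 0 < α' → 0 < β' →
      (CFC.rpow (absOp T) α' ∘L absOp A ∘L
        CFC.rpow (absOp (ContinuousLinearMap.adjoint T)) β').IsPositive := by
  intro α' β' hα' hβ'
  simp only [← nonneg_iff_isPositive, ← mul_def, ← mul_assoc, CFC.rpow_eq_pow] at h ⊢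
  have hBP : Commute (absOp A) (absOp T ^ α) :=
    ((commute_absOp_of_commute (absOp_nonneg T).isSelfAdjoint hc1).cfc_nnreal _).symm
  have hBQ : Commute (absOp A) (absOp (adjoint T) ^ β) := (Commute.cfc_nnreal hc2 _).symm
  have key := rpow_mul_mul_rpow_nonneg CFC.rpow_nonneg CFC.rpow_nonneg (absOp_nonneg A)
    hBP hBQ h (α' / α) (β' / β)
  rwa [rpow_rpow_div_self (absOp_nonneg T) hα hα'.le,
    rpow_rpow_div_self (absOp_nonneg (adjoint T)) hβ hβ'.le] at key

theorem stmt17 (T A U_T U_A : H →L[ℂ] H)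
    (hT : IsPolarDecomp T U_T) (hA : IsPolarDecomp A U_A)
    (hc1 : absOp T ∘L A = A ∘L absOp T)
    (hc2 : absOp (ContinuousLinearMap.adjoint T) ∘L absOp A =
      absOp A ∘L absOp (ContinuousLinearMap.adjoint T))
    (α β : ℝ) (hα : 0 < α) (hβ : 0 < β)
    (h : (CFC.rpow (absOp T) α ∘L absOp A ∘L
      CFC.rpow (absOp (ContinuousLinearMap.adjoint T)) β).IsPositive) :
    ∀ α' β' : ℝ, 0 < α' → 0 < β' →
      (CFC.rpow (absOp T) α' ∘L absOp A ∘L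
        CFC.rpow (absOp (ContinuousLinearMap.adjoint T)) β').IsPositive :=
  stmt17_general T A hc1 hc2 α β hα hβ h
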